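/- If f ∈ Poly is homogeneous of degree k, then f = Σ_{(i₁ ≤ ⋯ ≤ i_k)} c_{(i₁,…,i_k)} · 𝔉_{(i₁,…,i_k)}, where the sum is over weakly increasing sequences of positive integers of length k and c_{(i₁,…,i_k)} is the integer to which the constant polynomial D_{i₁}(D_{i₂}(⋯(D_{i_k}(f))⋯)) is equal; only finitely many of these coefficients are nonzero. -/

import Mathlib

/-
Conventions: `Pol = MvPolynomial ℕ ℤ` with the Lean variable `X i` representing
the paper's variable `x_{i+1}` (0-indexed).  All operators carrying a paper index
`i ≥ 1` are represented by Lean operators indexed by `i : ℕ` (Lean `i` ↔ paper `i+1`),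
and sequences of positive integers are represented by sequences of natural numbers
(entry `v` ↔ paper entry `v+1`).
-/

open MvPolynomial
open scoped Classical

abbrev Pol := MvPolynomial ℕ ℤ

noncomputable section

/-- Interchange the variables `x_{i+1}` and `x_{i+2}` (paper indexing). -/
def swapVar (i : ℕ) (f : Pol) : Pol := rename (Equiv.swap i (i+1)) f

/-- Exact division: the unique `g` with `d * g = f` when it exists (`0` otherwise). -/
def exactDiv (d f : Pol) : Pol := if h : ∃ g : Pol, d * g = f then h.choose else 0

/-- The divided difference operator `∂_{i+1}` (paper indexing). -/
def ddiff (i : ℕ) (f : Pol) : Pol := exactDiv (X i - X (i+1)) (f - swapVar i f)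

/-- The Bergeron–Sottile operator `R_{i+1}` (paper indexing): `x_j ↦ x_j` for
`j < i+1`, `x_{i+1} ↦ 0`, `x_j ↦ x_{j-1}` for `j > i+1`. -/
def BS (i : ℕ) : Pol →ₐ[ℤ] Pol :=
  aeval fun j => if j < i then X j else if j = i then 0 else X (j-1)

/-- `m`-fold iterate of `BS i`. -/
def BSit (i m : ℕ) (f : Pol) : Pol := (fun g => BS i g)^[m] f

/-- `Z g = Σ_{k ≥ 0} R₁ᵏ g`. -/
def Zop (f : Pol) : Pol := ∑ᶠ k : ℕ, BSit 0 k f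

/-- `Z^{(m)} g = Σ_{k ≥ 0} R₁^{km} g`. -/
def Zm (m : ℕ) (f : Pol) : Pol := ∑ᶠ k : ℕ, BSit 0 (k * m) f

/-- The truncation operator keeping the first `n` variables: `Π_n` in paper indexing. -/
def truncOp (n : ℕ) : Pol →ₐ[ℤ] Pol := aeval fun j => if j < n then X j else 0

/-- The quasisymmetric divided difference `T_{i+1}` defined as the exact quotient
`((R_{i+2} - R_{i+1})f)/x_{i+1}` (paper indexing). -/
def TqDiv (i : ℕ) (f : Pol) : Pol := exactDiv (X i) (BS (i+1) f - BS i f)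

/-- The quasisymmetric divided difference `T_{i+1} = R_{i+1} ∘ ∂_{i+1}` (paper indexing). -/
def Tq (i : ℕ) (f : Pol) : Pol := BS i (ddiff i f)

/-- The `m`-quasisymmetric divided difference `T^{(m)}_{i+1}` (paper indexing). -/
def Tm (m i : ℕ) (f : Pol) : Pol := exactDiv (X i) (BSit (i+1) m f - BSit i m f)

/-- The slide extractor `D_{i+1} = Π_{i+1} ∘ ∂_{i+1}` (paper indexing). -/
def Dop (i : ℕ) (f : Pol) : Pol := truncOp (i+1) (ddiff i f)

/-- The `m`-slide extractor `D^{(m)}_{i+1} = Π_{i+1} ∘ T^{(m)}_{i+1}` (paper indexing). -/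
def Dm (m i : ℕ) (f : Pol) : Pol := truncOp (i+1) (Tm m i f)

/-- The slide creator `B_{i+1} f = Σ_{k=1}^{i+1} x_k · R_k^{i+1-k}(Π_{i+1} f)` (paper indexing). -/
def Bop (i : ℕ) (f : Pol) : Pol :=
  ∑ k ∈ Finset.range (i+1), X k * BSit k (i - k) (truncOp (i+1) f)

/-- The creation operator `Z ∘ x_{i+1} ∘ R_{i+1}` (paper indexing). -/
def crea (i : ℕ) (f : Pol) : Pol := Zop (X i * BS i f)

/-- A permutation of `{0,1,2,…}` is finitely supported if it fixes all but
finitely many points. -/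
def FinSupp (w : Equiv.Perm ℕ) : Prop := Set.Finite {x | w x ≠ x}

/-- Coxeter length: the minimal `k` such that `w` is a product of `k` simple
transpositions. -/
def len (w : Equiv.Perm ℕ) : ℕ :=
  sInf {k | ∃ l : List ℕ, l.length = k ∧ (l.map fun i => Equiv.swap i (i+1)).prod = w}

/-- The set of reduced words for `w`. -/
def Red (w : Equiv.Perm ℕ) : Set (List ℕ) :=
  {l | l.length = len w ∧ (l.map fun i => Equiv.swap i (i+1)).prod = w}

/-- A family of polynomials indexed by permutations is a family of Schubert
polynomials if: each member is homogeneous of degree the length, the identity is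
sent to `1`, and divided differences act as expected (all this for finitely
supported permutations). -/
def IsSchubertFamily (S : Equiv.Perm ℕ → Pol) : Prop :=
  (∀ w, FinSupp w → (S w).IsHomogeneous (len w)) ∧
  S 1 = 1 ∧
  ∀ w, FinSupp w → ∀ i : ℕ,
    ddiff i (S w) = if w (i+1) < w i then S (w * Equiv.swap i (i+1)) else 0

/-- `b` is a compatible sequence for `a`. -/
def Compat {k : ℕ} (a b : Fin k → ℕ) : Prop :=
  Monotone b ∧ (∀ j, b j ≤ a j) ∧
  ∀ (j : ℕ) (h : j + 1 < k),
    a ⟨j, Nat.lt_of_succ_lt h⟩ < a ⟨j+1, h⟩ → b ⟨j, Nat.lt_of_succ_lt h⟩ < b ⟨j+1, h⟩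

/-- The slide polynomial `𝔉_a`, as the sum of the monomials of all compatible
sequences for `a`. -/
def slide {k : ℕ} (a : Fin k → ℕ) : Pol :=
  ∑ᶠ b ∈ {b : Fin k → ℕ | Compat a b}, ∏ j, X (b j)

/-- `b` is an `m`-compatible sequence for `a` (entrywise congruent mod `m`). -/
def MCompat (m : ℕ) {k : ℕ} (a b : Fin k → ℕ) : Prop :=
  Monotone b ∧ (∀ j, b j ≤ a j ∧ b j % m = a j % m) ∧
  ∀ (j : ℕ) (h : j + 1 < k),
    a ⟨j, Nat.lt_of_succ_lt h⟩ < a ⟨j+1, h⟩ → b ⟨j, Nat.lt_of_succ_lt h⟩ < b ⟨j+1, h⟩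

/-- The `m`-slide polynomial `𝔉ᵐ_a`. -/
def mslide (m : ℕ) {k : ℕ} (a : Fin k → ℕ) : Pol :=
  ∑ᶠ b ∈ {b : Fin k → ℕ | MCompat m a b}, ∏ j, X (b j)

/-- Value of the `m`-slide creator `B^{(m)}_{a+1}` (paper indexing) on the monomial with
exponent vector `d`. -/
def BmMono (m a : ℕ) (d : ℕ →₀ ℕ) : Pol :=
  if ∃ t, a < t ∧ d t ≠ 0 then 0
  else monomial (d.erase a) 1 *
    ∑ r ∈ Finset.range (a+1),
      if r * m ≤ a ∧ ∀ t, t < a → d t ≠ 0 → t < a - r * m then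
        X (a - r * m) ^ (d a + 1) else 0

/-- The `m`-slide creator `B^{(m)}_{a+1}` (paper indexing), extended linearly from
its values on monomials. -/
def Bm (m a : ℕ) (f : Pol) : Pol := ∑ d ∈ f.support, C (f.coeff d) * BmMono m a d

end

/-!
The slide extractor `D_i` kills every slide polynomial `𝔉_a` (with `a` weakly increasing)
unless `i` is the last entry of `a`, in which case `D_i 𝔉_a = 𝔉_{a'}`, where `a'` is `a`
with its last entry removed. Indeed `D_i x^b` for a weakly increasing `b` is `x^{b'}` when
`b` ends in `i`, is zero unless `b` ends in `i + 1` and avoids `i`, and `D_i ∘ s_i = -D_i`;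
when `i` is smaller than the last entry of `a`, swapping `i ↔ i + 1` pairs the compatible
sequences of `a` ending in `i` with those ending in `i + 1` and avoiding `i`, and the paired
terms cancel. Iterating, `D_{i₁} ⋯ D_{i_k} 𝔉_a = δ_{i,a}`. Since `𝔉_a = x^a + (monomials
`x^b` with `b < a` entrywise)`, the slide polynomials span the homogeneous polynomials of
degree `k`, and the dual functionals read off the coefficients.
-/

theorem Submodule.finite_and_eq_finsum_of_mem_span_of_dual {ι R M : Type*} [DecidableEq ι]
    [Semiring R] [AddCommMonoid M] [Module R M] {v : ι → M} {s : Set ι}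
    (φ : ι → M →ₗ[R] R)
    (hφ : ∀ i, ∀ a ∈ s, φ i (v a) = if i = a then 1 else 0) {x : M}
    (hx : x ∈ Submodule.span R (v '' s)) :
    {i | i ∈ s ∧ φ i x ≠ 0}.Finite ∧ x = ∑ᶠ i ∈ s, φ i x • v i := by
  obtain ⟨c, hcs, rfl⟩ := (Finsupp.mem_span_image_iff_linearCombination R).1 hx
  have hcoeff (i : ι) : φ i (Finsupp.linearCombination R v c) = c i := by
    rw [Finsupp.linearCombination_apply, map_finsuppSum, Finsupp.sum]
    simp only [map_smul, smul_eq_mul]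
    rw [Finset.sum_congr rfl fun a ha => by rw [hφ i a (hcs ha), mul_ite, mul_one, mul_zero],
      Finset.sum_ite_eq]
    split_ifs with hi
    · rfl
    · exact (Finsupp.notMem_support_iff.1 hi).symm
  simp only [hcoeff]
  refine ⟨c.support.finite_toSet.subset fun i hi => Finsupp.mem_support_iff.2 hi.2, ?_⟩
  rw [finsum_mem_eq_sum_of_subset _ (fun i hi => ?_) hcs]
  · rfl
  · exact Finsupp.mem_support_iff.2 fun h => hi.2 (by simp only [h, zero_smul])

section DividedDifference

variable (i : ℕ)

theorem swapVar_add (f g : Pol) : swapVar i (f + g) = swapVar i f + swapVar i g := map_add _ _ _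

theorem swapVar_mul (f g : Pol) : swapVar i (f * g) = swapVar i f * swapVar i g := map_mul _ _ _

theorem swapVar_X (t : ℕ) : swapVar i (X t) = X (Equiv.swap i (i + 1) t) := rename_X _ _

theorem swapVar_swapVar (f : Pol) : swapVar i (swapVar i f) = f := by
  simp only [swapVar, rename_rename, Equiv.swap_apply_self, Function.comp_def]
  exact rename_id_apply f

theorem X_sub_X_succ_ne_zero : (X i - X (i + 1) : Pol) ≠ 0 :=
  sub_ne_zero.2 fun h => by simpa using X_injective h

theorem X_sub_X_succ_dvd_sub_swapVar (f : Pol) : X i - X (i + 1) ∣ f - swapVar i f := by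
  rw [← Ideal.mem_span_singleton, ← Ideal.Quotient.eq]
  set I := Ideal.span {(X i - X (i + 1) : Pol)}
  have hXX : Ideal.Quotient.mk I (X i) = Ideal.Quotient.mk I (X (i + 1)) :=
    Ideal.Quotient.eq.2 (Ideal.subset_span rfl)
  have hmk : (Ideal.Quotient.mkₐ ℤ I).comp (rename (Equiv.swap i (i + 1))) =
      Ideal.Quotient.mkₐ ℤ I := by
    refine algHom_ext fun t => ?_
    simp only [AlgHom.comp_apply, rename_X, Ideal.Quotient.mkₐ_eq_mk, Equiv.swap_apply_def]
    split_ifs with h₁ h₂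
    · rw [h₁, hXX]
    · rw [h₂, hXX]
    · rfl
  exact (DFunLike.congr_fun hmk f).symm

theorem X_sub_X_succ_mul_ddiff (f : Pol) : (X i - X (i + 1)) * ddiff i f = f - swapVar i f := by
  have h : ∃ g : Pol, (X i - X (i + 1)) * g = f - swapVar i f :=
    (X_sub_X_succ_dvd_sub_swapVar i f).imp fun _ h => h.symm
  rw [ddiff, exactDiv, dif_pos h]
  exact h.choose_spec

variable {i} in
theorem ddiff_eq_of_mul_eq {f g : Pol} (h : (X i - X (i + 1)) * g = f - swapVar i f) :
    ddiff i f = g :=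
  mul_left_cancel₀ (X_sub_X_succ_ne_zero i) ((X_sub_X_succ_mul_ddiff i f).trans h.symm)

theorem ddiff_add (f g : Pol) : ddiff i (f + g) = ddiff i f + ddiff i g :=
  ddiff_eq_of_mul_eq <| by
    rw [mul_add, X_sub_X_succ_mul_ddiff, X_sub_X_succ_mul_ddiff, swapVar_add]; ring

theorem ddiff_mul (f g : Pol) : ddiff i (f * g) = ddiff i f * g + swapVar i f * ddiff i g :=
  ddiff_eq_of_mul_eq <| by
    rw [mul_add, ← mul_assoc, X_sub_X_succ_mul_ddiff, mul_left_comm, X_sub_X_succ_mul_ddiff,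
      swapVar_mul]
    ring

variable {i} in
theorem ddiff_eq_zero_of_swapVar_eq {f : Pol} (h : swapVar i f = f) : ddiff i f = 0 :=
  ddiff_eq_of_mul_eq <| by rw [h, sub_self, mul_zero]

theorem ddiff_X_self : ddiff i (X i) = 1 :=
  ddiff_eq_of_mul_eq <| by rw [swapVar_X, Equiv.swap_apply_left, mul_one]

theorem ddiff_swapVar (f : Pol) : ddiff i (swapVar i f) = -ddiff i f :=
  ddiff_eq_of_mul_eq <| by rw [swapVar_swapVar, mul_neg, X_sub_X_succ_mul_ddiff, neg_sub]

end DividedDifference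

section SlideExtractor

variable {i : ℕ}

theorem truncOp_X (n t : ℕ) : truncOp n (X t) = if t < n then X t else 0 := aeval_X _ _

variable (i) in
theorem Dop_add (f g : Pol) : Dop i (f + g) = Dop i f + Dop i g := by
  rw [Dop, Dop, Dop, ddiff_add, map_add]

variable (i) in
theorem Dop_swapVar (f : Pol) : Dop i (swapVar i f) = -Dop i f := by
  rw [Dop, Dop, ddiff_swapVar, map_neg]

theorem Dop_eq_zero_of_swapVar_eq {f : Pol} (h : swapVar i f = f) : Dop i f = 0 := by
  rw [Dop, ddiff_eq_zero_of_swapVar_eq h, map_zero]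

theorem Dop_mul_of_swapVar_eq {g : Pol} (hg : swapVar i g = g) (f : Pol) :
    Dop i (g * f) = truncOp (i + 1) g * Dop i f := by
  rw [Dop, Dop, ddiff_mul, ddiff_eq_zero_of_swapVar_eq hg, hg, zero_mul, zero_add, map_mul]

theorem Dop_eq_zero_of_dvd {g f : Pol} (hg : swapVar i g = g) (hg' : truncOp (i + 1) g = 0)
    (h : g ∣ f) : Dop i f = 0 := by
  obtain ⟨f, rfl⟩ := h
  rw [Dop_mul_of_swapVar_eq hg, hg', zero_mul]

variable (i) in
theorem Dop_mul_X_self (f : Pol) :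
    Dop i (f * X i) = Dop i f * X i + truncOp (i + 1) (swapVar i f) := by
  rw [Dop, Dop, ddiff_mul, ddiff_X_self, mul_one, map_add, map_mul, truncOp_X,
    if_pos i.lt_succ_self]

variable (i) in
noncomputable def DopLinear : Pol →ₗ[ℤ] Pol :=
  (AddMonoidHom.mk' (Dop i) (Dop_add i)).toIntLinearMap

variable (i) in
theorem Dop_sum {α : Type*} (s : Finset α) (f : α → Pol) :
    Dop i (∑ x ∈ s, f x) = ∑ x ∈ s, Dop i (f x) :=
  map_sum (DopLinear i) f s

noncomputable def chainDop (l : List ℕ) : Pol →ₗ[ℤ] Pol :=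
  l.foldr (fun i g => DopLinear i ∘ₗ g) LinearMap.id

theorem chainDop_apply (l : List ℕ) (f : Pol) :
    chainDop l f = l.foldr (fun idx g => Dop idx g) f := by
  induction l with
  | nil => rfl
  | cons i l ih => exact congrArg (Dop i) ih

noncomputable def slideCoeff {k : ℕ} (i : Fin k → ℕ) : Pol →ₗ[ℤ] ℤ :=
  lcoeff ℤ 0 ∘ₗ chainDop (List.ofFn i)

theorem slideCoeff_apply {k : ℕ} (i : Fin k → ℕ) (f : Pol) :
    slideCoeff i f = constantCoeff ((List.ofFn i).foldr (fun idx g => Dop idx g) f) := by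
  rw [slideCoeff, LinearMap.comp_apply, chainDop_apply, lcoeff_apply, constantCoeff_eq]

theorem slideCoeff_succ {k : ℕ} (i : Fin (k + 1) → ℕ) (f : Pol) :
    slideCoeff i f = slideCoeff (Fin.init i) (Dop (i (Fin.last k)) f) := by
  rw [slideCoeff_apply, slideCoeff_apply, List.ofFn_succ', List.concat_eq_append,
    List.foldr_append]
  rfl

end SlideExtractor

section SeqMonomial

variable {i k : ℕ}

noncomputable def seqMonomial (b : Fin k → ℕ) : Pol := ∏ j, X (b j)

variable (i) in
theorem swapVar_seqMonomial (b : Fin k → ℕ) :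
    swapVar i (seqMonomial b) = seqMonomial (Equiv.swap i (i + 1) ∘ b) := by
  simp only [seqMonomial, swapVar, map_prod, rename_X, Function.comp_apply]

theorem seqMonomial_eq_init_mul (b : Fin (k + 1) → ℕ) :
    seqMonomial b = seqMonomial (Fin.init b) * X (b (Fin.last k)) :=
  Fin.prod_univ_castSucc _

theorem Dop_seqMonomial_of_lt {b : Fin k → ℕ} (h : ∀ l, b l < i) :
    Dop i (seqMonomial b) = 0 :=
  Dop_eq_zero_of_swapVar_eq <| by
    rw [swapVar_seqMonomial]
    congr 1
    funext l
    exact Equiv.swap_apply_of_ne_of_ne (h l).ne (by have := h l; omega)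

theorem Dop_seqMonomial_mul_X_self :
    ∀ {k : ℕ} (b : Fin k → ℕ), (∀ l, b l ≤ i) →
      Dop i (seqMonomial b * X i) = seqMonomial b
  | 0, b, _ => by rw [seqMonomial, Fin.prod_univ_zero, one_mul, Dop, ddiff_X_self, map_one]
  | k + 1, b, hb => by
    have ih := Dop_seqMonomial_mul_X_self (Fin.init b) fun l => hb l.castSucc
    rw [seqMonomial_eq_init_mul]
    rcases (hb (Fin.last k)).lt_or_eq with hlt | heq
    · have hfix : swapVar i (X (b (Fin.last k))) = X (b (Fin.last k)) := by
        rw [swapVar_X, Equiv.swap_apply_of_ne_of_ne hlt.ne (by omega)]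
      rw [mul_right_comm, mul_comm, Dop_mul_of_swapVar_eq hfix, ih, truncOp_X,
        if_pos (by omega), mul_comm]
    · rw [heq, Dop_mul_X_self, ih, swapVar_mul, swapVar_X, Equiv.swap_apply_left, map_mul,
        truncOp_X, if_neg (lt_irrefl _), mul_zero, add_zero]

theorem Dop_seqMonomial_of_last_eq {b : Fin (k + 1) → ℕ} (hb : Monotone b)
    (h : b (Fin.last k) = i) : Dop i (seqMonomial b) = seqMonomial (Fin.init b) := by
  rw [seqMonomial_eq_init_mul, h]
  exact Dop_seqMonomial_mul_X_self _ fun l => h ▸ hb (Fin.le_last _)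

theorem Dop_seqMonomial_eq_zero {b : Fin (k + 1) → ℕ} (hb : Monotone b)
    (h₁ : b (Fin.last k) ≠ i) (h₂ : ¬(b (Fin.last k) = i + 1 ∧ ∀ l, b l ≠ i)) :
    Dop i (seqMonomial b) = 0 := by
  rcases lt_trichotomy (b (Fin.last k)) (i + 1) with hlt | heq | hgt
  · exact Dop_seqMonomial_of_lt fun l => (hb (Fin.le_last l)).trans_lt (by omega)
  · obtain ⟨l, hl⟩ : ∃ l, b l = i := by simpa [heq] using h₂
    have hne : l ≠ Fin.last k := by rintro rfl; omega
    refine Dop_eq_zero_of_dvd (g := X i * X (i + 1)) ?_ ?_ ?_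
    · rw [swapVar_mul, swapVar_X, swapVar_X, Equiv.swap_apply_left, Equiv.swap_apply_right,
        mul_comm]
    · rw [map_mul, truncOp_X, truncOp_X, if_neg (lt_irrefl _), mul_zero]
    · rw [show X i * X (i + 1) = ∏ j ∈ {l, Fin.last k}, X (b j) by
        rw [Finset.prod_pair hne, hl, heq]]
      exact Finset.prod_dvd_prod_of_subset _ _ _ (Finset.subset_univ _)
  · refine Dop_eq_zero_of_dvd (g := X (b (Fin.last k))) ?_ ?_
      (Finset.dvd_prod_of_mem _ (Finset.mem_univ _))
    · rw [swapVar_X, Equiv.swap_apply_of_ne_of_ne (by omega) (by omega)]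
    · rw [truncOp_X, if_neg (by omega)]

end SeqMonomial

section Compat

variable {k : ℕ}

theorem Monotone.fin_init {a : Fin (k + 1) → ℕ} (ha : Monotone a) : Monotone (Fin.init a) :=
  ha.comp Fin.strictMono_castSucc.monotone

theorem compat_refl {a : Fin k → ℕ} (ha : Monotone a) : Compat a a :=
  ⟨ha, fun _ => le_rfl, fun _ _ => id⟩

theorem compat_iff {a b : Fin k → ℕ} (ha : Monotone a) :
    Compat a b ↔ Monotone b ∧ (∀ j, b j ≤ a j) ∧ ∀ j j', a j < a j' → b j < b j' := by
  refine ⟨fun ⟨hb, hba, hstep⟩ => ⟨hb, hba, fun j => ?_⟩,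
    fun ⟨hb, hba, h⟩ => ⟨hb, hba, fun _ _ => h _ _⟩⟩
  suffices ∀ n (hn : n < k), a j < a ⟨n, hn⟩ → b j < b ⟨n, hn⟩ from
    fun j' => this j' j'.2
  intro n
  induction n with
  | zero => exact fun hn h => absurd (ha (Nat.zero_le _ : (⟨0, hn⟩ : Fin k) ≤ j)) (not_le.2 h)
  | succ n ih =>
    intro hn h
    by_cases hstep' : a ⟨n, by omega⟩ < a ⟨n + 1, hn⟩
    · have hjn : j ≤ ⟨n, by omega⟩ := by
        by_contra hjn
        have : (⟨n + 1, hn⟩ : Fin k) ≤ j := not_le.1 hjn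
        exact absurd (ha this) (not_le.2 h)
      exact (hb hjn).trans_lt (hstep n hn hstep')
    · exact (ih _ (h.trans_le (not_lt.1 hstep'))).trans_le (hb (Nat.le_succ n))

theorem Compat.init {a b : Fin (k + 1) → ℕ} (ha : Monotone a) (h : Compat a b) :
    Compat (Fin.init a) (Fin.init b) := by
  obtain ⟨hb, hba, hab⟩ := (compat_iff ha).1 h
  exact (compat_iff ha.fin_init).2 ⟨hb.fin_init, fun j => hba _, fun j j' => hab _ _⟩

theorem compat_snoc_last {a : Fin (k + 1) → ℕ} (ha : Monotone a) {c : Fin k → ℕ}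
    (hc : Compat (Fin.init a) c) : Compat a (Fin.snoc c (a (Fin.last k))) := by
  obtain ⟨hcm, hca, hcs⟩ := (compat_iff ha.fin_init).1 hc
  have hlast (j : Fin k) : c j ≤ a (Fin.last k) := (hca j).trans (ha (Fin.le_last _))
  refine (compat_iff ha).2 ⟨fun u v huv => ?_, fun j => ?_, fun j j' h => ?_⟩
  · cases v using Fin.lastCases with
    | last => cases u using Fin.lastCases <;> simp [hlast]
    | cast v =>
      cases u using Fin.lastCases with
      | last => exact absurd huv (not_le.2 (Fin.castSucc_lt_last v))
      | cast u => simpa using hcm (Fin.castSucc_le_castSucc_iff.1 huv)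
  · cases j using Fin.lastCases with
    | last => simp
    | cast j => simpa [Fin.init] using hca j
  · cases j' using Fin.lastCases with
    | last =>
      cases j using Fin.lastCases with
      | last => exact absurd h (lt_irrefl _)
      | cast j => simpa using (hca j).trans_lt h
    | cast j' =>
      cases j using Fin.lastCases with
      | last => exact absurd (ha (Fin.le_last _)) (not_le.2 h)
      | cast j => simpa using hcs j j' h

theorem compat_swap_of_last_eq {a b : Fin (k + 1) → ℕ} (ha : Monotone a) (h : Compat a b)
    {i : ℕ} (hbi : b (Fin.last k) = i) (hi : i < a (Fin.last k)) :
    Compat a (Equiv.swap i (i + 1) ∘ b) := by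
  obtain ⟨hb, hba, hab⟩ := (compat_iff ha).1 h
  have hle (l) : b l ≤ i := hbi ▸ hb (Fin.le_last l)
  have hbound (l) (hl : b l = i) : i + 1 ≤ a l := by
    by_contra hcon
    have := hab l (Fin.last k) (by omega)
    omega
  refine (compat_iff ha).2 ⟨fun u v huv => ?_, fun l => ?_, fun j j' hjj' => ?_⟩ <;>
    simp only [Function.comp_apply, Equiv.swap_apply_def]
  · have := hb huv; have := hle u; have := hle v; split_ifs <;> omega
  · have := hba l; have := hle l
    split_ifs with hl
    · exact hbound l hl
    · omega
    · omega
  · have := hab j j' hjj'; have := hle j; have := hle j'; split_ifs <;> omega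

theorem compat_swap_of_last_eq_succ {a b : Fin (k + 1) → ℕ} (ha : Monotone a) (h : Compat a b)
    {i : ℕ} (hbi : b (Fin.last k) = i + 1) (hno : ∀ l, b l ≠ i) :
    Compat a (Equiv.swap i (i + 1) ∘ b) := by
  obtain ⟨hb, hba, hab⟩ := (compat_iff ha).1 h
  have hle (l) : b l ≤ i + 1 := hbi ▸ hb (Fin.le_last l)
  refine (compat_iff ha).2 ⟨fun u v huv => ?_, fun l => ?_, fun j j' hjj' => ?_⟩ <;>
    simp only [Function.comp_apply, Equiv.swap_apply_def]
  · have := hb huv; have := hle u; have := hle v; have := hno u; have := hno v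
    split_ifs <;> omega
  · have := hba l; have := hle l; have := hno l; split_ifs <;> omega
  · have := hab j j' hjj'; have := hno j; have := hno j'; split_ifs <;> omega

noncomputable def compatFinset (a : Fin k → ℕ) : Finset (Fin k → ℕ) :=
  (Fintype.piFinset fun j => Finset.range (a j + 1)).filter (Compat a)

theorem mem_compatFinset {a b : Fin k → ℕ} : b ∈ compatFinset a ↔ Compat a b :=
  Finset.mem_filter.trans ⟨And.right, fun h => ⟨Fintype.mem_piFinset.2 fun j =>
    Finset.mem_range.2 (Nat.lt_succ_of_le (h.2.1 j)), h⟩⟩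

theorem slide_eq_sum (a : Fin k → ℕ) : slide a = ∑ b ∈ compatFinset a, seqMonomial b := by
  rw [slide, ← finsum_mem_coe_finset]
  exact finsum_mem_congr (Set.ext fun _ => mem_compatFinset.symm) fun _ _ => rfl

theorem slide_of_fin_zero (a : Fin 0 → ℕ) : slide a = 1 := by
  rw [slide_eq_sum, Finset.sum_eq_single_of_mem a
    (mem_compatFinset.2 (compat_refl fun u => u.elim0))
    fun b _ hb => absurd (Subsingleton.elim b a) hb,
    seqMonomial, Fin.prod_univ_zero]

end Compat

section SlideExtractorOnSlides

variable {k : ℕ}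

theorem Dop_slide_eq_sum (i : ℕ) (a : Fin (k + 1) → ℕ) :
    Dop i (slide a) =
      ∑ b ∈ (compatFinset a).filter (fun b => b (Fin.last k) = i), Dop i (seqMonomial b) +
      ∑ b ∈ (compatFinset a).filter (fun b => b (Fin.last k) = i + 1 ∧ ∀ l, b l ≠ i),
        Dop i (seqMonomial b) := by
  rw [slide_eq_sum, Dop_sum, ← Finset.sum_union
    (Finset.disjoint_filter.2 fun b _ h₁ h₂ => by omega), ← Finset.filter_or]
  refine (Finset.sum_filter_of_ne fun b hb hne => ?_).symm
  by_contra hPQ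
  rw [not_or] at hPQ
  exact hne (Dop_seqMonomial_eq_zero (mem_compatFinset.1 hb).1 hPQ.1 hPQ.2)

theorem Dop_slide_of_last_lt {a : Fin (k + 1) → ℕ} (ha : Monotone a) {i : ℕ}
    (h : a (Fin.last k) < i) : Dop i (slide a) = 0 := by
  rw [slide_eq_sum, Dop_sum]
  exact Finset.sum_eq_zero fun b hb => Dop_seqMonomial_of_lt fun l =>
    ((mem_compatFinset.1 hb).2.1 l).trans_lt ((ha (Fin.le_last l)).trans_lt h)

theorem Dop_last_slide {a : Fin (k + 1) → ℕ} (ha : Monotone a) :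
    Dop (a (Fin.last k)) (slide a) = slide (Fin.init a) := by
  rw [Dop_slide_eq_sum, ← add_zero (slide (Fin.init a)), slide_eq_sum]
  congr 1
  · refine Finset.sum_nbij' Fin.init (fun c => Fin.snoc c (a (Fin.last k))) (fun b hb => ?_)
      (fun c hc => ?_) (fun b hb => ?_) (fun c _ => Fin.init_snoc _ _) (fun b hb => ?_)
    · rw [Finset.mem_filter, mem_compatFinset] at hb
      exact mem_compatFinset.2 (hb.1.init ha)
    · exact Finset.mem_filter.2
        ⟨mem_compatFinset.2 (compat_snoc_last ha (mem_compatFinset.1 hc)), Fin.snoc_last _ _⟩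
    · rw [← (Finset.mem_filter.1 hb).2]
      exact Fin.snoc_init_self b
    · rw [Finset.mem_filter, mem_compatFinset] at hb
      exact Dop_seqMonomial_of_last_eq hb.1.1 hb.2
  · refine Finset.sum_eq_zero fun b hb => ?_
    rw [Finset.mem_filter, mem_compatFinset] at hb
    have := hb.1.2.1 (Fin.last k)
    omega

/-- Swapping the entries `i ↔ i + 1` pairs the two sums of `Dop_slide_eq_sum`, and the
paired terms cancel because `D_i ∘ s_i = -D_i`. -/
theorem Dop_slide_of_lt_last {a : Fin (k + 1) → ℕ} (ha : Monotone a) {i : ℕ}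
    (h : i < a (Fin.last k)) : Dop i (slide a) = 0 := by
  rw [Dop_slide_eq_sum, add_eq_zero_iff_eq_neg, ← Finset.sum_neg_distrib]
  have hswap (b : Fin (k + 1) → ℕ) :
      Equiv.swap i (i + 1) ∘ (Equiv.swap i (i + 1) ∘ b) = b :=
    funext fun _ => Equiv.swap_apply_self _ _ _
  refine Finset.sum_nbij' (Equiv.swap i (i + 1) ∘ ·) (Equiv.swap i (i + 1) ∘ ·)
    (fun b hb => ?_) (fun c hc => ?_) (fun b _ => hswap b) (fun c _ => hswap c)
    (fun b _ => ?_)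
  · rw [Finset.mem_filter, mem_compatFinset] at hb ⊢
    have hle (l) : b l ≤ i := hb.2 ▸ hb.1.1 (Fin.le_last l)
    refine ⟨compat_swap_of_last_eq ha hb.1 hb.2 h, ?_, fun l => ?_⟩
    · rw [Function.comp_apply, hb.2, Equiv.swap_apply_left]
    · have := hle l
      rw [Function.comp_apply, Equiv.swap_apply_def]
      split_ifs <;> omega
  · rw [Finset.mem_filter, mem_compatFinset] at hc ⊢
    exact ⟨compat_swap_of_last_eq_succ ha hc.1 hc.2.1 hc.2.2,
      by rw [Function.comp_apply, hc.2.1, Equiv.swap_apply_right]⟩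
  · rw [← swapVar_seqMonomial, Dop_swapVar, neg_neg]

theorem Dop_slide {a : Fin (k + 1) → ℕ} (ha : Monotone a) (i : ℕ) :
    Dop i (slide a) = if i = a (Fin.last k) then slide (Fin.init a) else 0 := by
  split_ifs with h
  · rw [h, Dop_last_slide ha]
  · rcases lt_or_gt_of_ne h with h | h
    exacts [Dop_slide_of_lt_last ha h, Dop_slide_of_last_lt ha h]

theorem slideCoeff_slide (i : Fin k → ℕ) {a : Fin k → ℕ} (ha : Monotone a) :
    slideCoeff i (slide a) = if i = a then 1 else 0 := by
  induction k with
  | zero =>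
    rw [if_pos (Subsingleton.elim i a), slide_of_fin_zero, slideCoeff_apply, List.ofFn_zero,
      List.foldr_nil, map_one]
  | succ k ih =>
    rw [slideCoeff_succ, Dop_slide ha]
    split_ifs with hlast hia hia
    · rw [ih _ ha.fin_init, if_pos (congrArg Fin.init hia)]
    · rw [ih _ ha.fin_init, if_neg fun h => hia ?_]
      rw [← Fin.snoc_init_self i, ← Fin.snoc_init_self a, h, hlast]
    · exact absurd (congrFun hia _) hlast
    · rw [map_zero]

end SlideExtractorOnSlides

section Span

variable {k : ℕ}

/-- `𝔉_b = x^b + ∑ x^c` over compatible `c ≠ b`, all of smaller entry sum. -/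
theorem seqMonomial_mem_span_slide {b : Fin k → ℕ} (hb : Monotone b) :
    seqMonomial b ∈ Submodule.span ℤ (slide '' {a : Fin k → ℕ | Monotone a}) := by
  induction hn : ∑ j, b j using Nat.strong_induction_on generalizing b with
  | _ n ih =>
    have hmem : b ∈ compatFinset b := mem_compatFinset.2 (compat_refl hb)
    have hsplit : seqMonomial b = slide b - ∑ c ∈ (compatFinset b).erase b, seqMonomial c := by
      rw [slide_eq_sum, ← Finset.add_sum_erase _ _ hmem, add_sub_cancel_right]
    rw [hsplit]
    refine Submodule.sub_mem _ (Submodule.subset_span ⟨b, hb, rfl⟩)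
      (Submodule.sum_mem _ fun c hc => ?_)
    obtain ⟨hcb, hc⟩ := Finset.mem_erase.1 hc
    obtain ⟨hcm, hcle, -⟩ := mem_compatFinset.1 hc
    refine ih _ (hn ▸ Finset.sum_lt_sum (fun j _ => hcle j) ?_) hcm rfl
    by_contra! hge
    exact hcb (funext fun j => (hcle j).antisymm (hge j (Finset.mem_univ j)))

theorem exists_seqMonomial_eq_monomial :
    ∀ {k : ℕ} (d : ℕ →₀ ℕ), d.degree = k →
      ∃ b : Fin k → ℕ, seqMonomial b = monomial d 1
  | 0, d, hd => ⟨Fin.elim0, by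
      rw [(Finsupp.degree_eq_zero_iff d).1 hd, seqMonomial, Fin.prod_univ_zero, ← C_apply, C_1]⟩
  | k + 1, d, hd => by
    obtain ⟨t, ht⟩ : ∃ t, d t ≠ 0 := by
      by_contra! h
      rw [show d = 0 from Finsupp.ext h, map_zero] at hd
      omega
    have hsplit : d - Finsupp.single t 1 + Finsupp.single t 1 = d :=
      tsub_add_cancel_of_le (Finsupp.single_le_iff.2 (Nat.one_le_iff_ne_zero.2 ht))
    obtain ⟨b, hb⟩ := exists_seqMonomial_eq_monomial (k := k) (d - Finsupp.single t 1) (by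
      rw [← hsplit, map_add, Finsupp.degree_single] at hd
      omega)
    refine ⟨Fin.snoc b t, ?_⟩
    rw [seqMonomial_eq_init_mul, Fin.init_snoc, Fin.snoc_last, hb, X, monomial_mul, one_mul,
      hsplit]

theorem exists_monotone_seqMonomial_eq_monomial {d : ℕ →₀ ℕ} (hd : d.degree = k) :
    ∃ b : Fin k → ℕ, Monotone b ∧ seqMonomial b = monomial d 1 := by
  obtain ⟨b, hb⟩ := exists_seqMonomial_eq_monomial d hd
  exact ⟨b ∘ Tuple.sort b, Tuple.monotone_sort b, (Equiv.prod_comp _ _).trans hb⟩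

theorem mem_span_slide_of_isHomogeneous {f : Pol} (hf : f.IsHomogeneous k) :
    f ∈ Submodule.span ℤ (slide '' {a : Fin k → ℕ | Monotone a}) := by
  rw [f.as_sum]
  refine Submodule.sum_mem _ fun d hd => ?_
  obtain ⟨b, hb, hbd⟩ := exists_monotone_seqMonomial_eq_monomial (k := k) (d := d)
    (by_contra fun h => mem_support_iff.1 hd (hf.coeff_eq_zero h))
  rw [← mul_one (coeff d f), ← smul_eq_mul, ← smul_monomial, ← hbd]
  exact Submodule.smul_mem _ _ (seqMonomial_mem_span_slide hb)

end Span

/-- slide expansion of a homogeneous polynomial of degree `k`, with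
coefficients extracted by the slide extractors; finitely many coefficients are nonzero. -/
theorem stmt_12 {k : ℕ} (f : Pol) (hf : f.IsHomogeneous k) :
    {i : Fin k → ℕ | Monotone i ∧
        constantCoeff ((List.ofFn i).foldr (fun idx g => Dop idx g) f) ≠ 0}.Finite ∧
    f = ∑ᶠ i ∈ {i : Fin k → ℕ | Monotone i},
        C (constantCoeff ((List.ofFn i).foldr (fun idx g => Dop idx g) f)) * slide i := by
  simp only [← slideCoeff_apply, ← smul_eq_C_mul]
  exact Submodule.finite_and_eq_finsum_of_mem_span_of_dual slideCoeff
    (fun i _ ha => slideCoeff_slide i ha) (mem_span_slide_of_isHomogeneous hf)
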